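/- Fix a configuration x = (x₁,…,x_n) ∈ (ℝ⁴)ⁿ and chronological products T(S) ∈ A for all proper subsets S ⊊ {1,…,n}, with T(∅) = 1, satisfying the causality axiom with respect to x. Suppose A_n, R_n ∈ A satisfy A_n − R_n = A′_n − R′_n, together with the support conditions: A_n = 0 if (x₁,…,x_n) ∉ Γ̄⁺(x_n), and R_n = 0 if (x₁,…,x_n) ∉ Γ̄⁻(x_n). Define T_n := A_n − A′_n (= R_n − R′_n). Then for every partition X₁ ⊔ X₂ = {1,…,n} with X₁ ≠ ∅, X₂ ≠ ∅ and x(X₁) ≥ x(X₂), one has T_n = T(X₁)·T(X₂). -/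

import Mathlib

/-- The Minkowski quadratic form on `ℝ⁴`. -/
def minkQ (x : Fin 4 → ℝ) : ℝ := x 0 ^ 2 - x 1 ^ 2 - x 2 ^ 2 - x 3 ^ 2

/-- The open forward light cone `V⁺`. -/
def Vplus : Set (Fin 4 → ℝ) := {x | 0 < minkQ x ∧ 0 < x 0}

/-- The open backward light cone `V⁻`. -/
def Vminus : Set (Fin 4 → ℝ) := {x | 0 < minkQ x ∧ x 0 < 0}

/-- Sum over all ordered partitions of `X` into `r ≥ 1` nonempty pairwise disjoint blocks
`X₁, …, X_r` of `(-1)^r * T X₁ * ⋯ * T X_r` (with value `1` for `X = ∅`), computed by peeling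
off the first block. -/
def opSum {A : Type*} [Ring A] {ι : Type*} [DecidableEq ι]
    (T : Finset ι → A) (X : Finset ι) : A :=
  if _hX : X = ∅ then 1
  else
    ∑ Y ∈ (X.powerset.filter (fun Y => Y ≠ ∅)).attach,
      (-1 : A) * T Y.1 * opSum T (X \ Y.1)
termination_by X.card
decreasing_by
  have hY := Y.2
  simp only [Finset.mem_filter, Finset.mem_powerset] at hY
  have h1 : Y.1.card ≤ X.card := Finset.card_le_card hY.1
  have h2 : 0 < Y.1.card := Finset.card_pos.mpr (Finset.nonempty_iff_ne_empty.mpr hY.2)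
  rw [Finset.card_sdiff, Finset.inter_eq_left.mpr hY.1]
  omega

/-- The antichronological products `T̄`, defined by `T̄(∅) = 1` and
`(−1)^{|X|} T̄(X) = Σ_{r=1}^{|X|} (−1)^r Σ T(X₁)⋯T(X_r)`, the inner sum running over all ordered
partitions of `X` into `r` nonempty pairwise disjoint subsets. -/
def chronoBar {A : Type*} [Ring A] {ι : Type*} [DecidableEq ι]
    (T : Finset ι → A) (X : Finset ι) : A :=
  (-1 : A) ^ X.card * opSum T X

/-- The advanced sum `A′_n := Σ (−1)^{|Y|} T(X)·T̄(Y)`, over all partitions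
`X ⊔ Y = {1,…,n}` with `n ∈ X` (here `lst` plays the role of the index `n`) and `Y ≠ ∅`. -/
def advP {A : Type*} [Ring A] {ι : Type*} [Fintype ι] [DecidableEq ι]
    (T : Finset ι → A) (lst : ι) : A :=
  ∑ Y ∈ (Finset.univ.erase lst).powerset.filter (fun Y => Y ≠ ∅),
    (-1 : A) ^ Y.card * (T Yᶜ * chronoBar T Y)

/-- The retarded sum `R′_n := Σ (−1)^{|Y|} T̄(Y)·T(X)`, over all partitions
`X ⊔ Y = {1,…,n}` with `n ∈ X` (here `lst` plays the role of the index `n`) and `Y ≠ ∅`. -/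
def retP {A : Type*} [Ring A] {ι : Type*} [Fintype ι] [DecidableEq ι]
    (T : Finset ι → A) (lst : ι) : A :=
  ∑ Y ∈ (Finset.univ.erase lst).powerset.filter (fun Y => Y ≠ ∅),
    (-1 : A) ^ Y.card * (chronoBar T Y * T Yᶜ)


/-! Write `f ⋆ g` for the subset convolution `(f ⋆ g)(X) = Σ_{Y ⊆ X} f(Y) g(X \ Y)` and
`Ť(X) = (-1)^|X| T(X)`. Unfolding `T̄` gives `Ť ⋆ T̄ = δ_∅`. The same identity over `Aᵐᵒᵖ`
says that `T̄` computed with reversed products is a left inverse of `Ť`. Hence `T̄` is the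
two-sided inverse of `Ť` and is unchanged by reversing products. Uniqueness of inverses then
shows that `T̄` reverses causal factorizations: `T̄(X₁ ∪ X₂) = T̄(X₂) T̄(X₁)`.

Let `X₁ ⊔ X₂` be a causal partition. Suppose first that `x_n ∈ X₁`. Then `A_n = 0` by its
support. Write each `Y` in `A′_n` as `Y₁ ⊔ Y₂` with `Y₁ ⊆ X₁ \ {n}` and `Y₂ ⊆ X₂`. Causality
gives `T(Yᶜ) = T(X₁ \ Y₁) T(X₂ \ Y₂)` and `T̄(Y) = T̄(Y₂) T̄(Y₁)`. So for fixed `Y₁` the sum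
over `Y₂` is `(-1)^|X₂| (Ť ⋆ T̄)(X₂) = 0`. The only term missing from `A′_n` is the one with
`Y = ∅`, which equals `T(X₁) T(X₂)`, so `A′_n = -T(X₁) T(X₂)`. If instead `x_n ∈ X₂`, then
`R_n = 0`, and the same computation over `Aᵐᵒᵖ` gives `R′_n = -T(X₁) T(X₂)`. -/

open Finset MulOpposite

section SubsetConvolution

variable {ι R : Type*}

def signed [Ring R] (T : Finset ι → R) (X : Finset ι) : R := (-1) ^ #X * T X

theorem signed_op [Ring R] (T : Finset ι → R) : signed (op ∘ T) = op ∘ signed T := by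
  funext X
  simp [signed, ((Commute.neg_one_left (T X)).pow_left _).eq]

variable [DecidableEq ι]

theorem sum_powerset_sdiff {M : Type*} [AddCommMonoid M] (X : Finset ι) (F : Finset ι → M) :
    ∑ Y ∈ X.powerset, F (X \ Y) = ∑ Y ∈ X.powerset, F Y :=
  sum_nbij' (X \ ·) (X \ ·) (by simp) (by simp)
    (fun _ hY => Finset.sdiff_sdiff_eq_self (mem_powerset.1 hY))
    (fun _ hY => Finset.sdiff_sdiff_eq_self (mem_powerset.1 hY)) fun _ _ => rfl

theorem sum_powerset_union {M : Type*} [AddCommMonoid M] {s t : Finset ι} (h : Disjoint s t)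
    (F : Finset ι → M) :
    ∑ u ∈ (s ∪ t).powerset, F u = ∑ a ∈ s.powerset, ∑ b ∈ t.powerset, F (a ∪ b) := by
  induction t using Finset.induction_on generalizing F with
  | empty => simp
  | insert x t hx ih =>
    have hxs : x ∉ s := disjoint_right.1 h (mem_insert_self x t)
    have h' := h.mono_right (subset_insert x t)
    rw [union_insert, sum_powerset_insert (by simp [hxs, hx]), ih h', ih h', ← sum_add_distrib]
    refine sum_congr rfl fun a _ => ?_
    simp only [sum_powerset_insert hx, union_insert]

def subsetConv [Semiring R] (f g : Finset ι → R) (X : Finset ι) : R :=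
  ∑ Y ∈ X.powerset, f Y * g (X \ Y)

section Semiring

variable [Semiring R]

theorem subsetConv_single_left (f : Finset ι → R) : subsetConv (Pi.single ∅ 1) f = f := by
  funext X
  rw [subsetConv, sum_eq_single_of_mem ∅ (empty_mem_powerset X)]
  · simp
  · intro Y _ hY
    simp [hY]

theorem subsetConv_single_right (f : Finset ι → R) : subsetConv f (Pi.single ∅ 1) = f := by
  funext X
  rw [subsetConv, sum_eq_single_of_mem X (mem_powerset_self X)]
  · simp
  · intro Y hY hYX
    have hXY : ¬X ⊆ Y := fun h => hYX (subset_antisymm (mem_powerset.1 hY) h)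
    simp [sdiff_eq_empty_iff_subset, hXY]

theorem subsetConv_assoc (f g h : Finset ι → R) :
    subsetConv (subsetConv f g) h = subsetConv f (subsetConv g h) := by
  funext X
  simp only [subsetConv, sum_mul, mul_sum, mul_assoc]
  rw [sum_sigma', sum_sigma']
  refine sum_nbij' (fun p => ⟨p.2, p.1 \ p.2⟩) (fun p => ⟨p.1 ∪ p.2, p.1⟩) ?_ ?_ ?_ ?_ ?_
  · rintro ⟨Y, Z⟩ h
    grind
  · rintro ⟨Z, W⟩ h
    grind
  · rintro ⟨Y, Z⟩ h
    simp only [mem_sigma, mem_powerset] at h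
    simp [union_sdiff_of_subset h.2]
  · rintro ⟨Z, W⟩ h
    simp only [mem_sigma, mem_powerset] at h
    simp [union_sdiff_cancel_left (disjoint_of_subset_right h.2 disjoint_sdiff)]
  · rintro ⟨Y, Z⟩ h
    simp only [mem_sigma, mem_powerset] at h
    simp [sdiff_sdiff_sdiff_cancel_right h.2]

theorem eq_of_subsetConv_left_inv {f g B : Finset ι → R} {X : Finset ι}
    (hg : subsetConv g f = Pi.single ∅ 1)
    (hB : ∀ Y ⊆ X, subsetConv f B Y = (Pi.single ∅ 1 : Finset ι → R) Y) : B X = g X :=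
  calc B X = subsetConv (subsetConv g f) B X := by rw [hg, subsetConv_single_left]
    _ = subsetConv g (Pi.single ∅ 1) X := by
      rw [subsetConv_assoc, subsetConv, subsetConv]
      exact sum_congr rfl fun Y _ => by rw [hB _ sdiff_subset]
    _ = g X := by rw [subsetConv_single_right]

theorem unop_subsetConv (f g : Finset ι → Rᵐᵒᵖ) (X : Finset ι) :
    unop (subsetConv f g X) = subsetConv (unop ∘ g) (unop ∘ f) X := by
  rw [subsetConv, unop_sum, subsetConv, ← sum_powerset_sdiff]
  refine sum_congr rfl fun Y hY => ?_
  simp [Finset.sdiff_sdiff_eq_self (mem_powerset.1 hY)]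

end Semiring

section Ring

variable [Ring R]

theorem neg_one_pow_card_sdiff {X Y : Finset ι} (h : Y ⊆ X) :
    (-1 : R) ^ #(X \ Y) = (-1) ^ #X * (-1) ^ #Y := by
  rw [← card_sdiff_add_card_eq_card h, pow_add, mul_assoc, ← pow_add, ← two_mul, pow_mul,
    neg_one_sq, one_pow, mul_one]

theorem signed_union {T : Finset ι → R} {X Y : Finset ι} (h : Disjoint X Y)
    (hT : T (X ∪ Y) = T X * T Y) : signed T (X ∪ Y) = signed T X * signed T Y := by
  rw [signed, signed, signed, card_union_of_disjoint h, pow_add, hT, mul_assoc, mul_assoc,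
    ← mul_assoc (T X), ← ((Commute.neg_one_left (T X)).pow_left _).eq, mul_assoc]

theorem opSum_of_ne_empty (T : Finset ι → R) {X : Finset ι} (hX : X ≠ ∅) :
    opSum T X = -∑ Y ∈ X.powerset.erase ∅, T Y * opSum T (X \ Y) := by
  rw [opSum, dif_neg hX, sum_attach _ fun Y => (-1 : R) * T Y * opSum T (X \ Y), filter_ne',
    ← sum_neg_distrib]
  simp only [neg_mul, one_mul]

theorem chronoBar_empty (T : Finset ι → R) : chronoBar T ∅ = 1 := by
  simp [chronoBar, opSum]

variable {T : Finset ι → R}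

theorem subsetConv_signed_chronoBar (hT1 : T ∅ = 1) :
    subsetConv (signed T) (chronoBar T) = Pi.single ∅ 1 := by
  funext X
  by_cases hX : X = ∅
  · subst hX
    simp [subsetConv, signed, chronoBar_empty, hT1]
  have hterm : ∀ Y ∈ X.powerset, signed T Y * chronoBar T (X \ Y) =
      (-1) ^ #X * (T Y * opSum T (X \ Y)) := by
    intro Y hY
    rw [signed, chronoBar, neg_one_pow_card_sdiff (mem_powerset.1 hY)]
    rcases neg_one_pow_eq_or R #X with h | h <;> rcases neg_one_pow_eq_or R #Y with h' | h' <;>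
      simp [h, h']
  rw [subsetConv, sum_congr rfl hterm, ← mul_sum, ← add_sum_erase _ _ (empty_mem_powerset X),
    hT1, sdiff_empty, one_mul, opSum_of_ne_empty T hX]
  simp [hX]

theorem subsetConv_unop_chronoBar_op_signed (hT1 : T ∅ = 1) :
    subsetConv (unop ∘ chronoBar (op ∘ T)) (signed T) = Pi.single ∅ 1 := by
  funext X
  have h := congrArg unop (congrFun (subsetConv_signed_chronoBar (T := op ∘ T) (by simp [hT1])) X)
  rw [unop_subsetConv, signed_op] at h
  simpa [Function.comp_def, Pi.single_apply, apply_ite unop] using h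

theorem chronoBar_op (hT1 : T ∅ = 1) (X : Finset ι) :
    chronoBar (op ∘ T) X = op (chronoBar T X) :=
  congrArg op (eq_of_subsetConv_left_inv (subsetConv_unop_chronoBar_op_signed hT1)
    fun Y _ => congrFun (subsetConv_signed_chronoBar hT1) Y).symm

theorem subsetConv_chronoBar_signed (hT1 : T ∅ = 1) :
    subsetConv (chronoBar T) (signed T) = Pi.single ∅ 1 := by
  have h : unop ∘ chronoBar (op ∘ T) = chronoBar T := funext fun X => by simp [chronoBar_op hT1]
  rw [← h, subsetConv_unop_chronoBar_op_signed hT1]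

theorem subsetConv_signed_chronoBar_mul_chronoBar (hT1 : T ∅ = 1) {X₁ X₂ Y₁ Y₂ : Finset ι}
    (hd : Disjoint X₁ X₂) (h₁ : Y₁ ⊆ X₁) (h₂ : Y₂ ⊆ X₂)
    (hc : ∀ S₁ ⊆ X₁, ∀ S₂ ⊆ X₂, T (S₁ ∪ S₂) = T S₁ * T S₂) :
    subsetConv (signed T) (fun Y => chronoBar T (Y ∩ X₂) * chronoBar T (Y ∩ X₁)) (Y₁ ∪ Y₂) =
      (Pi.single ∅ 1 : Finset ι → R) (Y₁ ∪ Y₂) := by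
  have hterm : ∀ Z₁ ∈ Y₁.powerset, ∀ Z₂ ∈ Y₂.powerset,
      signed T (Z₁ ∪ Z₂) * (chronoBar T ((Y₁ ∪ Y₂) \ (Z₁ ∪ Z₂) ∩ X₂) *
        chronoBar T ((Y₁ ∪ Y₂) \ (Z₁ ∪ Z₂) ∩ X₁)) =
      signed T Z₁ * (signed T Z₂ * chronoBar T (Y₂ \ Z₂)) * chronoBar T (Y₁ \ Z₁) := by
    intro Z₁ hZ₁ Z₂ hZ₂
    rw [mem_powerset] at hZ₁ hZ₂
    have e₁ : (Y₁ ∪ Y₂) \ (Z₁ ∪ Z₂) ∩ X₁ = Y₁ \ Z₁ := by grind [disjoint_left]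
    have e₂ : (Y₁ ∪ Y₂) \ (Z₁ ∪ Z₂) ∩ X₂ = Y₂ \ Z₂ := by grind [disjoint_left]
    rw [signed_union (hd.mono (hZ₁.trans h₁) (hZ₂.trans h₂)) (hc _ (hZ₁.trans h₁) _ (hZ₂.trans h₂)),
      e₁, e₂]
    simp only [mul_assoc]
  rw [subsetConv, sum_powerset_union (hd.mono h₁ h₂),
    sum_congr rfl fun Z₁ hZ₁ => sum_congr rfl (hterm Z₁ hZ₁)]
  simp_rw [← sum_mul, ← mul_sum]
  have hY₂ := congrFun (subsetConv_signed_chronoBar hT1) Y₂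
  rw [subsetConv] at hY₂
  rw [hY₂]
  rcases Y₂.eq_empty_or_nonempty with rfl | hne
  · simpa [subsetConv] using congrFun (subsetConv_signed_chronoBar hT1) Y₁
  · simp [hne.ne_empty]

theorem chronoBar_union (hT1 : T ∅ = 1) {X₁ X₂ : Finset ι} (hd : Disjoint X₁ X₂)
    (hc : ∀ S₁ ⊆ X₁, ∀ S₂ ⊆ X₂, T (S₁ ∪ S₂) = T S₁ * T S₂) :
    chronoBar T (X₁ ∪ X₂) = chronoBar T X₂ * chronoBar T X₁ := by
  have h := eq_of_subsetConv_left_inv (X := X₁ ∪ X₂) (subsetConv_chronoBar_signed hT1)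
    fun Y hY => by
      have := subsetConv_signed_chronoBar_mul_chronoBar hT1 hd (Y₁ := Y ∩ X₁) (Y₂ := Y ∩ X₂)
        inter_subset_right inter_subset_right hc
      rwa [← inter_union_distrib_left, inter_eq_left.2 hY] at this
  rwa [union_inter_cancel_right, union_inter_cancel_left, eq_comm] at h

theorem sum_neg_one_pow_mul_chronoBar_eq_zero (hT1 : T ∅ = 1) {X : Finset ι} (hX : X.Nonempty) :
    ∑ Y ∈ X.powerset, (-1) ^ #Y * (T (X \ Y) * chronoBar T Y) = 0 := by
  have h := congrFun (subsetConv_signed_chronoBar hT1) X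
  rw [Pi.single_apply, if_neg hX.ne_empty, subsetConv] at h
  rw [← sum_powerset_sdiff, ← mul_zero ((-1 : R) ^ #X), ← h, mul_sum]
  refine sum_congr rfl fun Y hY => ?_
  rw [Finset.sdiff_sdiff_eq_self (mem_powerset.1 hY), neg_one_pow_card_sdiff (mem_powerset.1 hY),
    signed]
  simp only [mul_assoc]

theorem sum_neg_one_pow_mul_sdiff_mul_chronoBar_eq_zero (hT1 : T ∅ = 1)
    {U₁ X₁ X₂ : Finset ι} (hU₁ : U₁ ⊆ X₁) (hd : Disjoint X₁ X₂) (h₂ : X₂.Nonempty)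
    (hc : ∀ S₁ ⊆ U₁, ∀ S₂ ⊆ X₂, T (S₁ ∪ S₂) = T S₁ * T S₂) :
    ∑ Y ∈ (U₁ ∪ X₂).powerset, (-1) ^ #Y * (T (X₁ \ Y) * T (X₂ \ Y) * chronoBar T Y) = 0 := by
  rw [sum_powerset_union (hd.mono_left hU₁)]
  refine sum_eq_zero fun Y₁ hY₁ => ?_
  rw [mem_powerset] at hY₁
  have hterm : ∀ Y₂ ∈ X₂.powerset,
      (-1) ^ #(Y₁ ∪ Y₂) * (T (X₁ \ (Y₁ ∪ Y₂)) * T (X₂ \ (Y₁ ∪ Y₂)) * chronoBar T (Y₁ ∪ Y₂)) =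
        (-1) ^ #Y₁ * T (X₁ \ Y₁) * ((-1) ^ #Y₂ * (T (X₂ \ Y₂) * chronoBar T Y₂)) *
          chronoBar T Y₁ := by
    intro Y₂ hY₂
    rw [mem_powerset] at hY₂
    have hY : Disjoint Y₁ Y₂ := hd.mono (hY₁.trans hU₁) hY₂
    have e₁ : X₁ \ (Y₁ ∪ Y₂) = X₁ \ Y₁ := by grind [disjoint_left]
    have e₂ : X₂ \ (Y₁ ∪ Y₂) = X₂ \ Y₂ := by grind [disjoint_left]
    have hbar : chronoBar T (Y₁ ∪ Y₂) = chronoBar T Y₂ * chronoBar T Y₁ :=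
      chronoBar_union hT1 hY fun S₁ hS₁ S₂ hS₂ => hc S₁ (hS₁.trans hY₁) S₂ (hS₂.trans hY₂)
    rw [e₁, e₂, hbar, card_union_of_disjoint hY, pow_add]
    rcases neg_one_pow_eq_or R #Y₁ with h | h <;> rcases neg_one_pow_eq_or R #Y₂ with h' | h' <;>
      simp [h, h', mul_assoc]
  rw [sum_congr rfl hterm, ← sum_mul, ← mul_sum, sum_neg_one_pow_mul_chronoBar_eq_zero hT1 h₂,
    mul_zero, zero_mul]

variable [Fintype ι]

theorem advP_eq_neg_mul (hT1 : T ∅ = 1) {lst : ι} {X₁ X₂ : Finset ι}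
    (hd : Disjoint X₁ X₂) (hu : X₁ ∪ X₂ = univ) (hl : lst ∈ X₁) (h₂ : X₂.Nonempty)
    (hc : ∀ S₁ ⊆ X₁, ∀ S₂ ⊆ X₂, S₁ ∪ S₂ ≠ univ → T (S₁ ∪ S₂) = T S₁ * T S₂) :
    advP T lst = -(T X₁ * T X₂) := by
  set G : Finset ι → R := fun Y => (-1) ^ #Y * (T (X₁ \ Y) * T (X₂ \ Y) * chronoBar T Y)
  have hU : univ.erase lst = X₁.erase lst ∪ X₂ := by
    rw [← hu, erase_union_distrib, erase_eq_of_notMem (disjoint_left.1 hd hl)]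
  have hF : ∀ Y ∈ (univ.erase lst).powerset.erase ∅,
      (-1) ^ #Y * (T Yᶜ * chronoBar T Y) = G Y := by
    intro Y hY
    have hcompl : Yᶜ = X₁ \ Y ∪ X₂ \ Y := by rw [compl_eq_univ_sdiff, ← hu, union_sdiff_distrib]
    have hne := (compl_ne_univ_iff_nonempty Y).2 (nonempty_iff_ne_empty.2 (mem_erase.1 hY).1)
    rw [hcompl] at hne ⊢
    rw [hc _ sdiff_subset _ sdiff_subset hne]
  have hG : ∑ Y ∈ (univ.erase lst).powerset, G Y = 0 := by
    rw [hU]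
    refine sum_neg_one_pow_mul_sdiff_mul_chronoBar_eq_zero hT1 (erase_subset _ _) hd h₂
      fun S₁ hS₁ S₂ hS₂ => hc S₁ (hS₁.trans (erase_subset _ _)) S₂ hS₂ ?_
    exact (ne_of_mem_of_not_mem' (mem_univ lst) (by grind [disjoint_left])).symm
  rw [advP, filter_ne', sum_congr rfl hF, sum_erase_eq_sub (empty_mem_powerset _), hG]
  simp [chronoBar_empty]

theorem advP_op (hT1 : T ∅ = 1) (lst : ι) : advP (op ∘ T) lst = op (retP T lst) := by
  rw [advP, retP, op_sum]
  refine sum_congr rfl fun Y _ => ?_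
  simp [chronoBar_op hT1, ((Commute.neg_one_left (chronoBar T Y * T Yᶜ)).pow_left _).eq]

theorem retP_eq_neg_mul (hT1 : T ∅ = 1) {lst : ι} {X₁ X₂ : Finset ι}
    (hd : Disjoint X₁ X₂) (hu : X₁ ∪ X₂ = univ) (hl : lst ∈ X₂) (h₁ : X₁.Nonempty)
    (hc : ∀ S₁ ⊆ X₁, ∀ S₂ ⊆ X₂, S₁ ∪ S₂ ≠ univ → T (S₁ ∪ S₂) = T S₁ * T S₂) :
    retP T lst = -(T X₁ * T X₂) := by
  have h := advP_eq_neg_mul (T := op ∘ T) (by simp [hT1]) hd.symm (by rwa [union_comm]) hl h₁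
    fun S₂ hS₂ S₁ hS₁ hne => by
      simp [union_comm S₂, hc S₁ hS₁ S₂ hS₂ (by rwa [union_comm])]
  rw [advP_op hT1] at h
  exact op_injective (by simpa using h)

end Ring

end SubsetConvolution

theorem Vminus_eq_neg_Vplus : Vminus = -Vplus := by
  ext v
  simp [Vplus, Vminus, minkQ]

theorem closure_Vminus : closure Vminus = -closure Vplus := by
  rw [Vminus_eq_neg_Vplus, neg_closure]

/-- Epstein–Glaser construction of the `n`-th chronological product: if `A_n − R_n = A′_n − R′_n`
with `A_n` supported in `Γ̄⁺(x_n)` and `R_n` supported in `Γ̄⁻(x_n)`, then `T_n := A_n − A′_n`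
satisfies the causality factorization `T_n = T(X₁)·T(X₂)` for every partition
`X₁ ⊔ X₂ = {1,…,n}` into nonempty parts with `x(X₁) ≥ x(X₂)`. -/
theorem chrono_n_causality {A : Type*} [Ring A] (n : ℕ) (hn : 0 < n)
    (x : Fin n → Fin 4 → ℝ)
    (T : Finset (Fin n) → A) (hT1 : T ∅ = 1)
    (hcaus : ∀ S₁ S₂ : Finset (Fin n), Disjoint S₁ S₂ → S₁ ∪ S₂ ≠ Finset.univ →
      (∀ i ∈ S₁, ∀ j ∈ S₂, x i - x j ∉ closure Vminus) → T (S₁ ∪ S₂) = T S₁ * T S₂)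
    (An Rn : A)
    (hARD : An - Rn = advP T ⟨n - 1, by omega⟩ - retP T ⟨n - 1, by omega⟩)
    (hAsupp : ¬ (∀ i : Fin n, (i : ℕ) < n - 1 →
      x i - x ⟨n - 1, by omega⟩ ∈ closure Vplus) → An = 0)
    (hRsupp : ¬ (∀ i : Fin n, (i : ℕ) < n - 1 →
      x i - x ⟨n - 1, by omega⟩ ∈ closure Vminus) → Rn = 0)
    (X₁ X₂ : Finset (Fin n)) (hd : Disjoint X₁ X₂) (hu : X₁ ∪ X₂ = Finset.univ)
    (h1 : X₁ ≠ ∅) (h2 : X₂ ≠ ∅)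
    (hx : ∀ i ∈ X₁, ∀ j ∈ X₂, x i - x j ∉ closure Vminus) :
    An - advP T ⟨n - 1, by omega⟩ = T X₁ * T X₂ := by
  set lst : Fin n := ⟨n - 1, by omega⟩
  have hc : ∀ S₁ ⊆ X₁, ∀ S₂ ⊆ X₂, S₁ ∪ S₂ ≠ univ → T (S₁ ∪ S₂) = T S₁ * T S₂ :=
    fun S₁ hS₁ S₂ hS₂ hne =>
      hcaus S₁ S₂ (hd.mono hS₁ hS₂) hne fun i hi j hj => hx i (hS₁ hi) j (hS₂ hj)
  have hlt : ∀ i ≠ lst, (i : ℕ) < n - 1 := fun i hi => by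
    have : (i : ℕ) ≠ n - 1 := fun h => hi (Fin.ext h)
    omega
  rcases mem_union.1 (hu ▸ mem_univ lst) with hl | hl
  · obtain ⟨j, hj⟩ := nonempty_iff_ne_empty.2 h2
    have hAn : An = 0 := hAsupp fun hall => hx lst hl j hj <| by
      rw [closure_Vminus, ← neg_sub]
      exact Set.neg_mem_neg.2 (hall j (hlt j (ne_of_mem_of_not_mem hj (disjoint_left.1 hd hl))))
    rw [hAn, advP_eq_neg_mul hT1 hd hu hl ⟨j, hj⟩ hc, zero_sub, neg_neg]
  · obtain ⟨i, hi⟩ := nonempty_iff_ne_empty.2 h1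
    have hRn : Rn = 0 := hRsupp fun hall =>
      hx i hi lst hl (hall i (hlt i (ne_of_mem_of_not_mem hi (disjoint_right.1 hd hl))))
    rw [sub_eq_sub_iff_sub_eq_sub.2 hARD, hRn, retP_eq_neg_mul hT1 hd hu hl ⟨i, hi⟩ hc, zero_sub,
      neg_neg]
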